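/- Let 𝓗 be a finite central hyperplane arrangement in ℝ^d, let X be an intersection of some subset of the hyperplanes, and let 𝓗_X = {H ∈ 𝓗 : X ⊆ H}. If C is a chamber of 𝓗 whose closure meets X in a set that spans X (C is 'adjacent' to X), then there exists a unique chamber op_X(C) with closure(C) ∩ X = closure(op_X(C)) ∩ X and S(C, op_X(C)) = 𝓗_X. Moreover, S(C, -op_X(C)) = 𝓗 \ 𝓗_X. -/
import Mathlib
open Filter Topology

private lemma sign_iff (a : ℝ) (ε : SignType) (hε : ε ≠ 0) :
    SignType.sign a = ε ↔ 0 < (ε : ℝ) * a := by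
  cases ε
  · simp at hε
  · simp [sign_eq_neg_one_iff]
  · simp [sign_eq_one_iff]

private lemma signType_neg_ne_zero : ∀ a : SignType, a ≠ 0 → -a ≠ 0 := by decide
private lemma signType_ne_neg_self : ∀ a : SignType, a ≠ 0 → a ≠ -a := by decide
private lemma signType_eq_neg : ∀ a b : SignType, a ≠ 0 → b ≠ 0 → a ≠ b → b = -a := by decide
private lemma signType_ne_neg_iff : ∀ a b : SignType, a ≠ 0 → b ≠ 0 → (a ≠ -b ↔ a = b) := by
  decide

private lemma closure_chamber {d : ℕ} {ι : Type} [Fintype ι]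
    (f : ι → ((Fin d → ℝ) →ₗ[ℝ] ℝ)) (ε : ι → ℝ) (y₀ : Fin d → ℝ)
    (hy₀ : ∀ i, 0 < ε i * f i y₀) :
    closure {z : Fin d → ℝ | ∀ i, 0 < ε i * f i z}
      = {z : Fin d → ℝ | ∀ i, 0 ≤ ε i * f i z} := by
  apply Set.Subset.antisymm
  · apply closure_minimal
    · intro z hz i; exact (hz i).le
    · have : {z : Fin d → ℝ | ∀ i, 0 ≤ ε i * f i z}
          = ⋂ i, {z : Fin d → ℝ | 0 ≤ ε i * f i z} := by
        ext z; simp [Set.mem_iInter]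
      rw [this]
      exact isClosed_iInter fun i =>
        isClosed_le continuous_const (continuous_const.mul (f i).continuous_of_finiteDimensional)
  · intro z hz
    have hu : Filter.Tendsto (fun n : ℕ => z + ((n : ℝ) + 1)⁻¹ • (y₀ - z)) atTop (𝓝 z) := by
      have h0 : Filter.Tendsto (fun n : ℕ => ((n : ℝ) + 1)⁻¹) atTop (𝓝 0) :=
        tendsto_one_div_add_atTop_nhds_zero_nat.congr (by intro n; rw [one_div])
      have := (h0.smul_const (y₀ - z)).const_add z
      simpa using this
    refine mem_closure_of_tendsto hu (Filter.Eventually.of_forall fun n => ?_)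
    intro i
    have hc1 : (0:ℝ) < ((n : ℝ) + 1)⁻¹ := by positivity
    have hc2 : ((n : ℝ) + 1)⁻¹ ≤ 1 := by
      rw [inv_le_one_iff₀]; right; linarith [Nat.cast_nonneg (α := ℝ) n]
    have : ε i * f i (z + ((n : ℝ) + 1)⁻¹ • (y₀ - z))
        = (1 - ((n : ℝ) + 1)⁻¹) * (ε i * f i z) + ((n : ℝ) + 1)⁻¹ * (ε i * f i y₀) := by
      simp [map_add, map_smul, map_sub, smul_eq_mul]; ring
    rw [this]
    have h1 := hz i
    have h2 := hy₀ i
    nlinarith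

/-- Opposite chamber with respect to a flat `X` of a central arrangement:
if the chamber `C` of `x` is adjacent to the flat `X = ⋂_{i ∈ s} ker (f i)`
(its closure meets `X` in a spanning set), then there is a unique chamber
`D = op_X(C)` with `closure C ∩ X = closure D ∩ X` and `S(C,D) = 𝓗_X`;
moreover `S(C, -D) = 𝓗 \ 𝓗_X`. -/
theorem stmt_4 (d : ℕ) (ι : Type) [Fintype ι]
    (f : ι → ((Fin d → ℝ) →ₗ[ℝ] ℝ)) (hf : ∀ i, f i ≠ 0)
    (s : Set ι) (X : Submodule ℝ (Fin d → ℝ))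
    (hX : X = ⨅ i ∈ s, LinearMap.ker (f i))
    (x : Fin d → ℝ) (hx : ∀ i, SignType.sign (f i x) ≠ 0)
    (hadj : Submodule.span ℝ
        (closure {y : Fin d → ℝ |
            ∀ i, SignType.sign (f i y) = SignType.sign (f i x)} ∩ (X : Set _))
      = X) :
    (∃! D : Set (Fin d → ℝ),
      (∃ y : Fin d → ℝ, (∀ i, SignType.sign (f i y) ≠ 0) ∧
        D = {z : Fin d → ℝ |
          ∀ i, SignType.sign (f i z) = SignType.sign (f i y)}) ∧
      closure {y : Fin d → ℝ |
          ∀ i, SignType.sign (f i y) = SignType.sign (f i x)} ∩ (X : Set _)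
        = closure D ∩ (X : Set _) ∧
      (∀ y ∈ D, {i : ι | SignType.sign (f i x) ≠ SignType.sign (f i y)}
        = {i : ι | (X : Set (Fin d → ℝ)) ⊆ (LinearMap.ker (f i) : Set _)})) ∧
    (∀ D : Set (Fin d → ℝ),
      ((∃ y : Fin d → ℝ, (∀ i, SignType.sign (f i y) ≠ 0) ∧
        D = {z : Fin d → ℝ |
          ∀ i, SignType.sign (f i z) = SignType.sign (f i y)}) ∧
      closure {y : Fin d → ℝ |
          ∀ i, SignType.sign (f i y) = SignType.sign (f i x)} ∩ (X : Set _)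
        = closure D ∩ (X : Set _) ∧
      (∀ y ∈ D, {i : ι | SignType.sign (f i x) ≠ SignType.sign (f i y)}
        = {i : ι | (X : Set (Fin d → ℝ)) ⊆ (LinearMap.ker (f i) : Set _)})) →
      ∀ y ∈ D, {i : ι | SignType.sign (f i x) ≠ SignType.sign (f i (-y))}
        = {i : ι | ¬ (X : Set (Fin d → ℝ)) ⊆ (LinearMap.ker (f i) : Set _)}) := by
  classical
  set C : Set (Fin d → ℝ) :=
    {y : Fin d → ℝ | ∀ i, SignType.sign (f i y) = SignType.sign (f i x)} with hCdef
  set ε : ι → ℝ := fun i => ((SignType.sign (f i x) : ℝ)) with hεdef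
  have hxC : ∀ i, 0 < ε i * f i x := fun i => (sign_iff _ _ (hx i)).mp rfl
  have hCset : C = {z : Fin d → ℝ | ∀ i, 0 < ε i * f i z} :=
    Set.ext fun z => forall_congr' fun i => sign_iff _ _ (hx i)
  have hclC : closure C = {z : Fin d → ℝ | ∀ i, 0 ≤ ε i * f i z} := by
    rw [hCset]; exact closure_chamber f ε x hxC
  -- abbreviation for the "H_X" predicate
  have hq : ∀ i, ∃ q : Fin d → ℝ, (q ∈ closure C ∩ (X : Set (Fin d → ℝ))) ∧
      (¬ (X : Set (Fin d → ℝ)) ⊆ (LinearMap.ker (f i) : Set _) → 0 < ε i * f i q) := by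
    intro i
    by_cases hPi : (X : Set (Fin d → ℝ)) ⊆ (LinearMap.ker (f i) : Set _)
    · refine ⟨0, ⟨?_, X.zero_mem⟩, fun h => absurd hPi h⟩
      rw [hclC]; intro j; simp
    · by_contra hcon
      push_neg at hcon
      have hker : closure C ∩ (X : Set (Fin d → ℝ)) ⊆ (LinearMap.ker (f i) : Set _) := by
        intro v hv
        have h1 : 0 ≤ ε i * f i v := by
          have := hv.1; rw [hclC] at this; exact this i
        have h2 := (hcon v hv).2
        have h3 : ε i * f i v = 0 := le_antisymm h2 h1
        have hεi : ε i ≠ 0 := fun h0 => by simpa [h0] using hxC i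
        have : f i v = 0 := (mul_eq_zero.mp h3).resolve_left hεi
        simpa [SetLike.mem_coe, LinearMap.mem_ker] using this
      refine hPi ?_
      have hle : Submodule.span ℝ (closure C ∩ (X : Set (Fin d → ℝ))) ≤ LinearMap.ker (f i) :=
        Submodule.span_le.mpr hker
      rw [hadj] at hle
      exact hle
  choose q hqK hqpos using hq
  set tset : Finset ι := Finset.univ.filter
    (fun i => ¬ (X : Set (Fin d → ℝ)) ⊆ (LinearMap.ker (f i) : Set _)) with htset
  set p : Fin d → ℝ := ∑ i ∈ tset, q i with hpdef
  have hpX : p ∈ X := Submodule.sum_mem X fun i _ => (hqK i).2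
  have hp0 : ∀ i, (X : Set (Fin d → ℝ)) ⊆ (LinearMap.ker (f i) : Set _) → f i p = 0 := by
    intro i hPi
    have := hPi hpX
    simpa [SetLike.mem_coe, LinearMap.mem_ker] using this
  have hppos : ∀ i, ¬ (X : Set (Fin d → ℝ)) ⊆ (LinearMap.ker (f i) : Set _) →
      0 < ε i * f i p := by
    intro i hPi
    have hsum : ε i * f i p = ∑ j ∈ tset, ε i * f i (q j) := by
      rw [hpdef, map_sum, Finset.mul_sum]
    rw [hsum]
    refine Finset.sum_pos' (fun j _ => ?_) ⟨i, ?_, hqpos i hPi⟩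
    · have := (hqK j).1; rw [hclC] at this; exact this i
    · exact Finset.mem_filter.mpr ⟨Finset.mem_univ i, hPi⟩
  have hev : ∀ᶠ t : ℝ in atTop, ∀ i ∈ tset, ε i * f i x < t * (ε i * f i p) := by
    rw [Filter.eventually_all_finset]
    intro i hi
    have hp := hppos i (Finset.mem_filter.mp hi).2
    filter_upwards [Filter.eventually_gt_atTop ((ε i * f i x) / (ε i * f i p))] with t ht
    exact (div_lt_iff₀ hp).mp ht
  obtain ⟨t, ht1, ht0⟩ := (hev.and (Filter.eventually_gt_atTop (0:ℝ))).exists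
  set y₀ : Fin d → ℝ := t • p - x with hy₀def
  have hfy₀ : ∀ i, f i y₀ = t * f i p - f i x := by
    intro i; rw [hy₀def]; simp [map_sub, map_smul, smul_eq_mul]
  have hσ1 : ∀ i, (X : Set (Fin d → ℝ)) ⊆ (LinearMap.ker (f i) : Set _) →
      SignType.sign (f i y₀) = -SignType.sign (f i x) := by
    intro i hPi
    have : f i y₀ = -(f i x) := by rw [hfy₀ i, hp0 i hPi]; ring
    rw [this, Left.sign_neg]
  have hσ2 : ∀ i, ¬ (X : Set (Fin d → ℝ)) ⊆ (LinearMap.ker (f i) : Set _) →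
      SignType.sign (f i y₀) = SignType.sign (f i x) := by
    intro i hPi
    apply (sign_iff _ _ (hx i)).mpr
    rw [hfy₀ i]
    have h1 := ht1 i (Finset.mem_filter.mpr ⟨Finset.mem_univ i, hPi⟩)
    have h2 : ε i * (t * f i p - f i x) = t * (ε i * f i p) - ε i * f i x := by ring
    rw [h2]; linarith
  have hσ0 : ∀ i, SignType.sign (f i y₀) ≠ 0 := by
    intro i
    by_cases hPi : (X : Set (Fin d → ℝ)) ⊆ (LinearMap.ker (f i) : Set _)
    · rw [hσ1 i hPi]
      exact signType_neg_ne_zero _ (hx i)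
    · rw [hσ2 i hPi]; exact hx i
  set D : Set (Fin d → ℝ) :=
    {z : Fin d → ℝ | ∀ i, SignType.sign (f i z) = SignType.sign (f i y₀)} with hDdef
  set ε' : ι → ℝ := fun i => ((SignType.sign (f i y₀) : ℝ)) with hε'def
  have hy₀D : ∀ i, 0 < ε' i * f i y₀ := fun i => (sign_iff _ _ (hσ0 i)).mp rfl
  have hDset : D = {z : Fin d → ℝ | ∀ i, 0 < ε' i * f i z} :=
    Set.ext fun z => forall_congr' fun i => sign_iff _ _ (hσ0 i)
  have hclD : closure D = {z : Fin d → ℝ | ∀ i, 0 ≤ ε' i * f i z} := by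
    rw [hDset]; exact closure_chamber f ε' y₀ hy₀D
  have hεε' : ∀ i, ¬ (X : Set (Fin d → ℝ)) ⊆ (LinearMap.ker (f i) : Set _) → ε' i = ε i := by
    intro i hPi; rw [hε'def, hεdef]; simp only; rw [hσ2 i hPi]
  have hXker : ∀ (v : Fin d → ℝ), v ∈ X →
      ∀ i, (X : Set (Fin d → ℝ)) ⊆ (LinearMap.ker (f i) : Set _) → f i v = 0 := by
    intro v hv i hPi
    have := hPi hv
    simpa [SetLike.mem_coe, LinearMap.mem_ker] using this
  have hclinter : closure C ∩ (X : Set (Fin d → ℝ)) = closure D ∩ (X : Set (Fin d → ℝ)) := by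
    ext v
    simp only [Set.mem_inter_iff, hclC, hclD, Set.mem_setOf_eq]
    constructor
    · rintro ⟨h1, h2⟩
      refine ⟨fun i => ?_, h2⟩
      by_cases hPi : (X : Set (Fin d → ℝ)) ⊆ (LinearMap.ker (f i) : Set _)
      · rw [hXker v h2 i hPi]; simp
      · rw [hεε' i hPi]; exact h1 i
    · rintro ⟨h1, h2⟩
      refine ⟨fun i => ?_, h2⟩
      by_cases hPi : (X : Set (Fin d → ℝ)) ⊆ (LinearMap.ker (f i) : Set _)
      · rw [hXker v h2 i hPi]; simp
      · rw [← hεε' i hPi]; exact h1 i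
  have hsepD : ∀ y ∈ D, {i : ι | SignType.sign (f i x) ≠ SignType.sign (f i y)}
      = {i : ι | (X : Set (Fin d → ℝ)) ⊆ (LinearMap.ker (f i) : Set _)} := by
    intro y hy
    ext i
    simp only [Set.mem_setOf_eq]
    rw [hy i]
    by_cases hPi : (X : Set (Fin d → ℝ)) ⊆ (LinearMap.ker (f i) : Set _)
    · rw [hσ1 i hPi]
      simp only [hPi, iff_true]
      intro h
      exact signType_ne_neg_self _ (hx i) h
    · rw [hσ2 i hPi]
      simp [hPi]
  constructor
  · refine ⟨D, ⟨⟨y₀, hσ0, rfl⟩, hclinter, hsepD⟩, ?_⟩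
    rintro D' ⟨⟨y₁, hy₁0, rfl⟩, hcl', hsep'⟩
    have hy₁mem : y₁ ∈ {z : Fin d → ℝ |
        ∀ i, SignType.sign (f i z) = SignType.sign (f i y₁)} := fun i => rfl
    have hkey : ∀ i, SignType.sign (f i y₁) = SignType.sign (f i y₀) := by
      intro i
      have hs := hsep' y₁ hy₁mem
      by_cases hPi : (X : Set (Fin d → ℝ)) ⊆ (LinearMap.ker (f i) : Set _)
      · have hne : SignType.sign (f i x) ≠ SignType.sign (f i y₁) := by
          have : i ∈ {i : ι | SignType.sign (f i x) ≠ SignType.sign (f i y₁)} := by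
            rw [hs]; exact hPi
          exact this
        rw [hσ1 i hPi]
        exact signType_eq_neg _ _ (hx i) (hy₁0 i) hne
      · have heq : SignType.sign (f i x) = SignType.sign (f i y₁) := by
          by_contra hne
          have : i ∈ {i : ι | SignType.sign (f i x) ≠ SignType.sign (f i y₁)} := hne
          rw [hs] at this
          exact hPi this
        rw [hσ2 i hPi, ← heq]
    exact Set.ext fun z => forall_congr' fun i => by rw [hkey i]
  · rintro D' ⟨⟨y₁, hy₁0, rfl⟩, hcl', hsep'⟩ y hy
    have hs := hsep' y hy
    ext i
    simp only [Set.mem_setOf_eq]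
    have hy0 : SignType.sign (f i y) ≠ 0 := by rw [hy i]; exact hy₁0 i
    have hneg : SignType.sign (f i (-y)) = -SignType.sign (f i y) := by
      rw [map_neg, Left.sign_neg]
    rw [hneg]
    have hiff : SignType.sign (f i x) ≠ SignType.sign (f i y) ↔
        (X : Set (Fin d → ℝ)) ⊆ (LinearMap.ker (f i) : Set _) := by
      constructor
      · intro h
        have : i ∈ {i : ι | SignType.sign (f i x) ≠ SignType.sign (f i y)} := h
        rw [hs] at this; exact this
      · intro h
        have : i ∈ {i : ι | (X : Set (Fin d → ℝ)) ⊆ (LinearMap.ker (f i) : Set _)} := h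
        rw [← hs] at this; exact this
    rw [signType_ne_neg_iff _ _ (hx i) hy0]
    constructor
    · intro h hP
      exact (hiff.mpr hP) h
    · intro h
      by_contra hne
      exact h (hiff.mp hne)
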